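/- arXiv:1504.01690 — 5 statements merged into one kernel-verified Lean document; each statement's English description precedes it below -/
import Mathlib

section
/- Let P be positive definite, H ∈ ℝ^{N×L}, and a ∈ ℝ^L with some coordinate a_ℓ satisfying a_ℓ² > λ_max(I + P HᵀH). Then aᵀ(P⁻¹ + HᵀH)⁻¹ a ≥ P_{ℓℓ}, i.e. the minimal effective noise variance is at least the ℓ-th power. Equivalently, if aᵀ(P⁻¹ + HᵀH)⁻¹ a < P_{ℓℓ} then a_ℓ² ≤ λ_max(I + P HᵀH). -/
/-!
With `B = P⁻¹ + HᵀH` (positive definite), `I + P HᵀH = P B` has the same spectrum as the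
symmetric matrix `P^{1/2} B P^{1/2}`, whose diagonal entry `P_ℓℓ B_ℓℓ` is therefore at most its
largest eigenvalue, hence below `a_ℓ²`. On the other hand Cauchy–Schwarz for the form `B⁻¹`,
applied to `a` and `B e_ℓ`, gives `a_ℓ² ≤ (aᵀ B⁻¹ a) B_ℓℓ`. Dividing by `B_ℓℓ > 0` gives the claim.
-/

open Matrix

namespace Matrix

variable {n : Type*} [Fintype n]

theorem spectrum_mul_comm {K : Type*} [Field K] [DecidableEq n] (A B : Matrix n n K) :
    spectrum K (A * B) = spectrum K (B * A) := by
  ext μ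
  simp only [mem_spectrum_iff_isRoot_charpoly, charpoly_mul_comm]

open scoped MatrixOrder in
theorem IsHermitian.apply_le_of_spectrum_le [DecidableEq n] {A : Matrix n n ℝ}
    (hA : A.IsHermitian) {c : ℝ} (h : ∀ μ ∈ spectrum ℝ A, μ ≤ c) (i : n) : A i i ≤ c := by
  have hle : A ≤ algebraMap ℝ _ c := le_algebraMap_of_spectrum_le h hA.isSelfAdjoint
  simpa [algebraMap_eq_diagonal, sub_nonneg] using (le_iff.mp hle).diag_nonneg (i := i)

theorem PosSemidef.dotProduct_mulVec_sq_le {A : Matrix n n ℝ} (hA : A.PosSemidef) (x y : n → ℝ) :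
    (x ⬝ᵥ A *ᵥ y) ^ 2 ≤ (x ⬝ᵥ A *ᵥ x) * (y ⬝ᵥ A *ᵥ y) := by
  let := A.toSeminormedAddCommGroup hA
  let := A.toInnerProductSpace hA
  have hinner (u v : n → ℝ) : inner ℝ u v = u ⬝ᵥ A *ᵥ v := by
    change (A *ᵥ v) ⬝ᵥ star u = _
    rw [star_trivial, dotProduct_comm]
  simpa only [hinner, ← sq] using real_inner_mul_inner_self_le x y

theorem PosDef.sq_apply_le_dotProduct_inv_mulVec_mul_diag [DecidableEq n] {A : Matrix n n ℝ}
    (hA : A.PosDef) (a : n → ℝ) (i : n) : a i ^ 2 ≤ (a ⬝ᵥ A⁻¹ *ᵥ a) * A i i := by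
  have := hA.inv.posSemidef.dotProduct_mulVec_sq_le a (A *ᵥ Pi.single i 1)
  rwa [mulVec_mulVec, nonsing_inv_mul _ ((isUnit_iff_isUnit_det A).mp hA.isUnit), one_mulVec,
    dotProduct_single, mul_one, mulVec_single_one, dotProduct_single, mul_one] at this

end Matrix

theorem stmt_2 {L N : ℕ} (d : Fin L → ℝ) (hd : ∀ ℓ, 0 < d ℓ)
    (H : Matrix (Fin N) (Fin L) ℝ) (a : Fin L → ℝ) (ℓ : Fin L)
    (h : ∀ μ ∈ spectrum ℝ
        ((1 : Matrix (Fin L) (Fin L) ℝ) + Matrix.diagonal d * Hᵀ * H), (a ℓ) ^ 2 > μ) :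
    a ⬝ᵥ (((Matrix.diagonal d)⁻¹ + Hᵀ * H)⁻¹).mulVec a ≥ d ℓ := by
  set B := (diagonal d)⁻¹ + Hᵀ * H
  have hD : (diagonal d).PosDef := posDef_diagonal_iff.mpr hd
  have hB : B.PosDef := hD.inv.add_posSemidef (posSemidef_conjTranspose_mul_self H)
  set s : Fin L → ℝ := fun i => √(d i)
  have hss : diagonal s * diagonal s = diagonal d := by
    rw [diagonal_mul_diagonal]
    exact congrArg diagonal (funext fun i => Real.mul_self_sqrt (hd i).le)
  have hdB : 1 + diagonal d * Hᵀ * H = diagonal d * B := by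
    rw [mul_add, mul_nonsing_inv _ ((isUnit_iff_isUnit_det _).mp hD.isUnit), Matrix.mul_assoc]
  have hspec :
      spectrum ℝ (1 + diagonal d * Hᵀ * H) = spectrum ℝ (diagonal s * B * diagonal s) := by
    rw [hdB, ← hss, mul_assoc, spectrum_mul_comm, mul_assoc]
  have hS : (diagonal s * B * diagonal s).IsHermitian := by
    simpa using isHermitian_mul_mul_conjTranspose (diagonal s) hB.isHermitian
  have hdiag : d ℓ * B ℓ ℓ ≤ a ℓ ^ 2 := by
    have := hS.apply_le_of_spectrum_le (fun μ hμ => (h μ (hspec ▸ hμ)).le) ℓ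
    rwa [mul_diagonal, diagonal_mul, mul_comm, ← mul_assoc, Real.mul_self_sqrt (hd ℓ).le] at this
  exact le_of_mul_le_mul_right
    (hdiag.trans (hB.sq_apply_le_dotProduct_inv_mulVec_mul_diag a ℓ)) hB.diag_pos
end

section
/- Let P be diagonal positive definite with entries P₁,…,P_L, H ∈ ℝ^{N×L} with columns h₁,…,h_L, and let δ_ℓ be the ℓ-th standard basis vector of ℝ^L. Then P_ℓ / (δ_ℓᵀ (P⁻¹ + HᵀH)⁻¹ δ_ℓ) = 1 + P_ℓ h_ℓᵀ (I + Σ_{i≠ℓ} P_i h_i h_iᵀ)⁻¹ h_ℓ. -/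
/-!
Write `M = I + ∑_{i ≠ ℓ} P_i h_i h_iᵀ` and `w = M⁻¹ h_ℓ`. The vector `y` with `y_ℓ = 1` and
`y_i = -P_i h_iᵀ w` for `i ≠ ℓ` satisfies `H y = h_ℓ - (M - I) w = w`, hence
`(P⁻¹ + HᵀH) y = (P_ℓ⁻¹ + h_ℓᵀ w) δ_ℓ`. Therefore
`δ_ℓᵀ (P⁻¹ + HᵀH)⁻¹ δ_ℓ = y_ℓ / (P_ℓ⁻¹ + h_ℓᵀ w) = P_ℓ / (1 + P_ℓ h_ℓᵀ M⁻¹ h_ℓ)`; positive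
definiteness of `M` and `P⁻¹ + HᵀH` gives the invertibility and `h_ℓᵀ M⁻¹ h_ℓ ≥ 0`.
-/

open Matrix Finset

section
variable {ι n K : Type*}

lemma posSemidef_sum_smul_vecMulVec_self [Fintype n] (s : Finset ι) {d : ι → ℝ}
    (hd : ∀ i ∈ s, 0 ≤ d i) (v : ι → n → ℝ) : (∑ i ∈ s, d i • vecMulVec (v i) (v i)).PosSemidef :=
  posSemidef_sum s fun i hi => by
    simpa using (posSemidef_vecMulVec_self_star (v i)).smul (hd i hi)

lemma sum_smul_vecMulVec_self_mulVec [CommSemiring K] [Fintype n] (s : Finset ι) (d : ι → K)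
    (v : ι → n → K) (w : n → K) :
    (∑ i ∈ s, d i • vecMulVec (v i) (v i)) *ᵥ w = ∑ i ∈ s, (d i * (v i ⬝ᵥ w)) • v i := by
  simp only [sum_mulVec, smul_mulVec, vecMulVec_mulVec, op_smul_eq_smul, smul_smul]

lemma transpose_of_mulVec [CommSemiring K] [Fintype ι] (v : ι → n → K) (y : ι → K) :
    (of v)ᵀ *ᵥ y = ∑ i, y i • v i := by
  rw [mulVec_transpose, vecMul_eq_sum]
  rfl

lemma single_dotProduct_inv_mulVec_single [Field K] [Fintype ι] [DecidableEq ι] {ℓ : ι}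
    {A : Matrix ι ι K} (hA : IsUnit A) {y : ι → K} {c : K} (hy : A *ᵥ y = c • Pi.single ℓ 1)
    (hc : c ≠ 0) : Pi.single ℓ 1 ⬝ᵥ A⁻¹ *ᵥ Pi.single ℓ 1 = c⁻¹ * y ℓ := by
  have := hA.invertible
  have hAy : Pi.single ℓ 1 = A *ᵥ (c⁻¹ • y) := by rw [mulVec_smul, hy, inv_smul_smul₀ hc]
  rw [inv_mulVec_eq_vec hAy, single_dotProduct, one_mul, Pi.smul_apply, smul_eq_mul]

variable [Field K] [Fintype ι] [DecidableEq ι] [Fintype n] [DecidableEq n]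
variable (d : ι → K) (v : ι → n → K) (ℓ : ι) (w : n → K)

def invColumnDirection : ι → K := fun i => if i = ℓ then 1 else -(d i * (v i ⬝ᵥ w))

variable {d v ℓ w}

lemma transpose_mulVec_invColumnDirection
    (hw : (1 + ∑ i ∈ univ.erase ℓ, d i • vecMulVec (v i) (v i)) *ᵥ w = v ℓ) :
    (of v)ᵀ *ᵥ invColumnDirection d v ℓ w = w := by
  rw [add_mulVec, one_mulVec, sum_smul_vecMulVec_self_mulVec] at hw
  rw [transpose_of_mulVec, ← add_sum_erase _ _ (mem_univ ℓ)]
  conv_rhs => rw [eq_sub_of_add_eq hw, sub_eq_add_neg, ← sum_neg_distrib]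
  congr 1
  · simp [invColumnDirection]
  · refine sum_congr rfl fun i hi => ?_
    simp [invColumnDirection, ne_of_mem_erase hi, neg_smul]

lemma mulVec_invColumnDirection_eq_smul_single (hd : ∀ i, d i ≠ 0)
    (hw : (1 + ∑ i ∈ univ.erase ℓ, d i • vecMulVec (v i) (v i)) *ᵥ w = v ℓ) :
    (diagonal d⁻¹ + of v * (of v)ᵀ) *ᵥ invColumnDirection d v ℓ w =
      ((d ℓ)⁻¹ + v ℓ ⬝ᵥ w) • Pi.single ℓ 1 := by
  rw [add_mulVec, ← mulVec_mulVec, transpose_mulVec_invColumnDirection hw]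
  ext i
  by_cases hi : i = ℓ
  · subst hi
    simp [mulVec, invColumnDirection]
  · simp [mulVec, invColumnDirection, hi, hd i]

end

theorem stmt_4 {L N : ℕ} (d : Fin L → ℝ) (hd : ∀ i, 0 < d i)
    (H : Matrix (Fin N) (Fin L) ℝ) (ℓ : Fin L) :
    let P := Matrix.diagonal d
    let h : Fin L → (Fin N → ℝ) := fun i => fun j => H j i
    let M := (1 : Matrix (Fin N) (Fin N) ℝ)
      + ∑ i ∈ Finset.univ.erase ℓ, d i • Matrix.vecMulVec (h i) (h i)
    d ℓ / (Pi.single ℓ 1 ⬝ᵥ ((P⁻¹ + Hᵀ * H)⁻¹).mulVec (Pi.single ℓ 1))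
      = 1 + d ℓ * (h ℓ ⬝ᵥ M⁻¹.mulVec (h ℓ)) := by
  intro P h M
  have hd₀ : ∀ i, d i ≠ 0 := fun i => (hd i).ne'
  have hP : P⁻¹ = diagonal d⁻¹ :=
    inv_eq_left_inv (by simp [P, diagonal_mul_diagonal, inv_mul_cancel₀ (hd₀ _)])
  have hHH : Hᵀ * H = of h * (of h)ᵀ := rfl
  have hM : M.PosDef :=
    PosDef.one.add_posSemidef (posSemidef_sum_smul_vecMulVec_self _ (fun i _ => (hd i).le) h)
  have hA : (diagonal d⁻¹ + of h * (of h)ᵀ).PosDef :=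
    (posDef_diagonal_iff.2 fun i => inv_pos.2 (hd i)).add_posSemidef
      (by simpa using posSemidef_self_mul_conjTranspose (of h))
  set w := M⁻¹ *ᵥ h ℓ
  have hw : M *ᵥ w = h ℓ := by
    rw [mulVec_mulVec, mul_nonsing_inv _ ((isUnit_iff_isUnit_det _).1 hM.isUnit), one_mulVec]
  have hs : 0 ≤ h ℓ ⬝ᵥ w := by
    simpa using hM.inv.posSemidef.dotProduct_mulVec_nonneg (h ℓ)
  have hc : (d ℓ)⁻¹ + h ℓ ⬝ᵥ w ≠ 0 := (add_pos_of_pos_of_nonneg (inv_pos.2 (hd ℓ)) hs).ne'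
  rw [hP, hHH, single_dotProduct_inv_mulVec_single hA.isUnit
    (mulVec_invColumnDirection_eq_smul_single hd₀ hw) hc]
  simp [invColumnDirection, mul_add, hd₀ ℓ]
end

section
/- Let F ∈ ℝ^{L×L} satisfy FᵀF = (P⁻¹ + HᵀH)⁻¹ where P is positive definite and H ∈ ℝ^{N×L}. Let A_{m-1} ∈ ℝ^{(m-1)×L} have rank m−1 and let N_{m−1} = I − F A_{m−1}ᵀ (A_{m−1} FᵀF A_{m−1}ᵀ)⁻¹ A_{m−1} Fᵀ. Then for any a ∈ ℝ^L, min over b ∈ ℝ^N, c ∈ ℝ^{m−1} of ‖b‖² + ‖(bᵀH + cᵀA_{m−1} − aᵀ)P^{1/2}‖² equals ‖N_{m−1} F a‖², attained at cᵀ = aᵀ FᵀF A_{m−1}ᵀ (A_{m−1} FᵀF A_{m−1}ᵀ)⁻¹ and bᵀ = (aᵀ − cᵀ A_{m−1}) P Hᵀ (I + H P Hᵀ)⁻¹. -/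
open Matrix

/-- The positive semidefinite square root, as defined in the older Mathlib. -/
noncomputable def Matrix.PosSemidef.sqrt {n : Type*} [Fintype n] [DecidableEq n]
    {A : Matrix n n ℝ} (hA : A.PosSemidef) : Matrix n n ℝ :=
  hA.isHermitian.eigenvectorUnitary.1 * diagonal ((↑) ∘ (√·) ∘ hA.isHermitian.eigenvalues) *
    (star hA.isHermitian.eigenvectorUnitary : Matrix n n ℝ)

/-!
With `e = Hᵀb + Aᵀc - a` the cost is `‖b‖² + eᵀPe`. Completing the square in `b` with
`M = I + HPHᵀ` leaves `eᵀ(P - PHᵀM⁻¹HP)e`, and by the Woodbury identity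
`P - PHᵀM⁻¹HP = (P⁻¹ + HᵀH)⁻¹ = FᵀF`, so the residual is `‖Fe‖² = ‖FAᵀc - Fa‖²`.
This is a least-squares problem in `c`: `c_opt` solves its normal equations, and the residual
`Fa - FAᵀc_opt = N_{m-1}Fa` is orthogonal to the range of `FAᵀ`, which splits the residual into
`‖FAᵀ(c - c_opt)‖² + ‖N_{m-1}Fa‖²`. Both squares vanish at `(b_opt, c_opt)`.
-/

namespace Matrix

section Sqrt

variable {n : Type*} [Fintype n] [DecidableEq n] {A : Matrix n n ℝ}

lemma PosSemidef.transpose_sqrt (hA : A.PosSemidef) : hA.sqrtᵀ = hA.sqrt := by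
  rw [← conjTranspose_eq_transpose_of_trivial]
  simp only [PosSemidef.sqrt, conjTranspose_mul, diagonal_conjTranspose, star_trivial,
    Matrix.mul_assoc]
  rfl

lemma PosSemidef.sqrt_mul_sqrt (hA : A.PosSemidef) : hA.sqrt * hA.sqrt = A := by
  have hD : diagonal (((↑) : ℝ → ℝ) ∘ (√·) ∘ hA.isHermitian.eigenvalues) *
      diagonal (((↑) : ℝ → ℝ) ∘ (√·) ∘ hA.isHermitian.eigenvalues) =
        diagonal (RCLike.ofReal ∘ hA.isHermitian.eigenvalues) := by
    rw [diagonal_mul_diagonal]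
    congr 1
    funext i
    simp [Real.mul_self_sqrt (hA.eigenvalues_nonneg i)]
  conv_rhs => rw [hA.isHermitian.spectral_theorem, Unitary.conjStarAlgAut_apply]
  simp only [PosSemidef.sqrt, Matrix.mul_assoc]
  rw [← Matrix.mul_assoc (star _ : Matrix n n ℝ) _ (diagonal _ * _),
    Unitary.coe_star_mul_self, Matrix.one_mul, ← Matrix.mul_assoc (diagonal _) (diagonal _), hD]

lemma PosSemidef.vecMul_sqrt_dotProduct_self (hA : A.PosSemidef) (x : n → ℝ) :
    (x ᵥ* hA.sqrt) ⬝ᵥ (x ᵥ* hA.sqrt) = x ⬝ᵥ A *ᵥ x := by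
  have hS : hA.sqrt *ᵥ (x ᵥ* hA.sqrt) = A *ᵥ x := by
    rw [← mulVec_transpose, hA.transpose_sqrt, mulVec_mulVec, hA.sqrt_mul_sqrt]
  rw [← dotProduct_mulVec, hS]

end Sqrt

variable {R : Type*} [CommRing R] {k l m : Type*} [Fintype k] [Fintype l] [Fintype m]

lemma linearIndependent_row_of_rank_eq_card {K : Type*} [Field K] (A : Matrix m l K)
    (h : A.rank = Fintype.card m) : LinearIndependent K A.row := by
  rw [linearIndependent_iff_card_eq_finrank_span, Set.finrank, ← rank_eq_finrank_span_row, h]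

lemma PosDef.mul_mul_transpose_of_rank_eq_card {Q : Matrix l l ℝ} (hQ : Q.PosDef)
    {A : Matrix m l ℝ} (hA : A.rank = Fintype.card m) : (A * Q * Aᵀ).PosDef :=
  hQ.mul_mul_conjTranspose_same <|
    vecMul_injective_iff.2 (linearIndependent_row_of_rank_eq_card A hA)

lemma mulVec_dotProduct (B : Matrix l m R) (x : m → R) (y : l → R) :
    (B *ᵥ x) ⬝ᵥ y = x ⬝ᵥ Bᵀ *ᵥ y := by
  rw [← vecMul_transpose, ← dotProduct_mulVec]

lemma IsSymm.dotProduct_mulVec_comm {M : Matrix l l R} (hM : M.IsSymm) (x y : l → R) :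
    x ⬝ᵥ M *ᵥ y = y ⬝ᵥ M *ᵥ x := by
  rw [dotProduct_mulVec, ← mulVec_transpose, hM.eq, dotProduct_comm]

lemma dotProduct_self_mulVec_sub_of_normal_eq {B : Matrix l m R} {c₀ : m → R} {y : l → R}
    (hc₀ : Bᵀ *ᵥ (y - B *ᵥ c₀) = 0) (c : m → R) :
    (B *ᵥ c - y) ⬝ᵥ (B *ᵥ c - y) =
      (B *ᵥ (c - c₀)) ⬝ᵥ (B *ᵥ (c - c₀)) + (y - B *ᵥ c₀) ⬝ᵥ (y - B *ᵥ c₀) := by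
  have horth : (B *ᵥ (c - c₀)) ⬝ᵥ (y - B *ᵥ c₀) = 0 := by
    rw [mulVec_dotProduct, hc₀, dotProduct_zero]
  have hsplit : B *ᵥ c - y = B *ᵥ (c - c₀) - (y - B *ᵥ c₀) := by
    rw [mulVec_sub]; abel
  set u := B *ᵥ (c - c₀)
  set r := y - B *ᵥ c₀
  rw [hsplit, sub_dotProduct, dotProduct_sub u u r, dotProduct_sub r u r, dotProduct_comm r u,
    horth]
  ring

lemma transpose_mulVec_sub_mulVec_gram_inv [DecidableEq m] {B : Matrix l m R}
    (hG : IsUnit (Bᵀ * B).det) (y : l → R) : Bᵀ *ᵥ (y - B *ᵥ (Bᵀ * B)⁻¹ *ᵥ Bᵀ *ᵥ y) = 0 := by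
  rw [mulVec_sub, mulVec_mulVec, mulVec_mulVec, mul_nonsing_inv _ hG, one_mulVec, sub_self]

variable [DecidableEq k] [DecidableEq l]

lemma IsSymm.dotProduct_mulVec_add_inv_mulVec {M : Matrix l l R} (hM : M.IsSymm)
    (hdet : IsUnit M.det) (x g : l → R) :
    (x + M⁻¹ *ᵥ g) ⬝ᵥ M *ᵥ (x + M⁻¹ *ᵥ g) = x ⬝ᵥ M *ᵥ x + 2 * (g ⬝ᵥ x) + g ⬝ᵥ M⁻¹ *ᵥ g := by
  have hMinv : M *ᵥ M⁻¹ *ᵥ g = g := by rw [mulVec_mulVec, mul_nonsing_inv _ hdet, one_mulVec]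
  rw [mulVec_add, hMinv, add_dotProduct, dotProduct_add, dotProduct_add,
    hM.dotProduct_mulVec_comm (M⁻¹ *ᵥ g), hMinv, dotProduct_comm (M⁻¹ *ᵥ g), dotProduct_comm x g]
  ring

lemma inv_inv_add_transpose_mul_self {P : Matrix l l R} (hP : IsUnit P.det) (H : Matrix k l R)
    (hM : IsUnit (1 + H * P * Hᵀ).det) :
    (P⁻¹ + Hᵀ * H)⁻¹ = P - P * Hᵀ * (1 + H * P * Hᵀ)⁻¹ * H * P := by
  have hPinv : IsUnit P⁻¹ := (isUnit_iff_isUnit_det _).2 (isUnit_nonsing_inv_det _ hP)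
  have hM' : IsUnit ((1 : Matrix k k R)⁻¹ + H * P⁻¹⁻¹ * Hᵀ) := by
    rw [inv_one, nonsing_inv_nonsing_inv _ hP]
    exact (isUnit_iff_isUnit_det _).2 hM
  simpa [nonsing_inv_nonsing_inv _ hP] using
    add_mul_mul_inv_eq_sub P⁻¹ Hᵀ 1 H hPinv isUnit_one hM'

lemma dotProduct_self_add_quadForm_eq {P : Matrix l l R} (hPt : P.IsSymm) (hP : IsUnit P.det)
    (H : Matrix k l R) (hM : IsUnit (1 + H * P * Hᵀ).det) (b : k → R) (e : l → R) :
    b ⬝ᵥ b + (Hᵀ *ᵥ b + e) ⬝ᵥ P *ᵥ (Hᵀ *ᵥ b + e) =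
      (b + (1 + H * P * Hᵀ)⁻¹ *ᵥ (H * P) *ᵥ e) ⬝ᵥ
          (1 + H * P * Hᵀ) *ᵥ (b + (1 + H * P * Hᵀ)⁻¹ *ᵥ (H * P) *ᵥ e) +
        e ⬝ᵥ (P⁻¹ + Hᵀ * H)⁻¹ *ᵥ e := by
  have hMt : (1 + H * P * Hᵀ).IsSymm := by
    simp [IsSymm, transpose_add, transpose_mul, hPt.eq, Matrix.mul_assoc]
  rw [hMt.dotProduct_mulVec_add_inv_mulVec hM, inv_inv_add_transpose_mul_self hP H hM]
  set g := (H * P) *ᵥ e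
  have hquad : (Hᵀ *ᵥ b + e) ⬝ᵥ P *ᵥ (Hᵀ *ᵥ b + e) =
      b ⬝ᵥ (H * P * Hᵀ) *ᵥ b + 2 * (g ⬝ᵥ b) + e ⬝ᵥ P *ᵥ e := by
    have hcross : (Hᵀ *ᵥ b) ⬝ᵥ P *ᵥ e = g ⬝ᵥ b := by
      rw [mulVec_dotProduct, transpose_transpose, mulVec_mulVec, dotProduct_comm]
    rw [mulVec_add, add_dotProduct, dotProduct_add, dotProduct_add,
      hPt.dotProduct_mulVec_comm e, hcross, mulVec_dotProduct, transpose_transpose,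
      mulVec_mulVec, mulVec_mulVec]
    ring
  have hres : g ⬝ᵥ (1 + H * P * Hᵀ)⁻¹ *ᵥ g =
      e ⬝ᵥ (P * Hᵀ * (1 + H * P * Hᵀ)⁻¹ * H * P) *ᵥ e := by
    rw [mulVec_dotProduct, mulVec_mulVec, mulVec_mulVec, transpose_mul, hPt.eq]
    simp only [Matrix.mul_assoc]
  rw [hquad, hres, add_mulVec, one_mulVec, dotProduct_add, sub_mulVec, dotProduct_sub]
  ring

lemma mmse_cost_eq {P : Matrix l l R} (hPt : P.IsSymm) (hP : IsUnit P.det) (H : Matrix k l R)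
    (hM : IsUnit (1 + H * P * Hᵀ).det) {F : Matrix l l R} (hF : Fᵀ * F = (P⁻¹ + Hᵀ * H)⁻¹)
    (A : Matrix m l R) {a : l → R} {c₀ : m → R}
    (hc₀ : (F * Aᵀ)ᵀ *ᵥ (F *ᵥ a - (F * Aᵀ) *ᵥ c₀) = 0) (b : k → R) (c : m → R) :
    b ⬝ᵥ b + (Hᵀ *ᵥ b + Aᵀ *ᵥ c - a) ⬝ᵥ P *ᵥ (Hᵀ *ᵥ b + Aᵀ *ᵥ c - a) =
      (b + (1 + H * P * Hᵀ)⁻¹ *ᵥ (H * P) *ᵥ (Aᵀ *ᵥ c - a)) ⬝ᵥ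
          (1 + H * P * Hᵀ) *ᵥ (b + (1 + H * P * Hᵀ)⁻¹ *ᵥ (H * P) *ᵥ (Aᵀ *ᵥ c - a)) +
        ((F * Aᵀ) *ᵥ (c - c₀)) ⬝ᵥ ((F * Aᵀ) *ᵥ (c - c₀)) +
        (F *ᵥ a - (F * Aᵀ) *ᵥ c₀) ⬝ᵥ (F *ᵥ a - (F * Aᵀ) *ᵥ c₀) := by
  have hFe : (Aᵀ *ᵥ c - a) ⬝ᵥ (Fᵀ * F) *ᵥ (Aᵀ *ᵥ c - a) =
      ((F * Aᵀ) *ᵥ c - F *ᵥ a) ⬝ᵥ ((F * Aᵀ) *ᵥ c - F *ᵥ a) := by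
    rw [← mulVec_mulVec, ← mulVec_dotProduct, ← mulVec_mulVec, ← mulVec_sub]
  rw [add_sub_assoc, dotProduct_self_add_quadForm_eq hPt hP H hM, ← hF, hFe,
    dotProduct_self_mulVec_sub_of_normal_eq hc₀, add_assoc]

end Matrix

theorem stmt_5 {L N m : ℕ} (P : Matrix (Fin L) (Fin L) ℝ) (hP : P.PosDef)
    (H : Matrix (Fin N) (Fin L) ℝ) (F : Matrix (Fin L) (Fin L) ℝ)
    (hF : Fᵀ * F = (P⁻¹ + Hᵀ * H)⁻¹)
    (A : Matrix (Fin m) (Fin L) ℝ) (hA : A.rank = m) (a : Fin L → ℝ) :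
    let S := hP.posSemidef.sqrt
    let f : (Fin N → ℝ) → (Fin m → ℝ) → ℝ := fun b c =>
      b ⬝ᵥ b + (vecMul (vecMul b H + vecMul c A - a) S) ⬝ᵥ
        (vecMul (vecMul b H + vecMul c A - a) S)
    let Nm := (1 : Matrix (Fin L) (Fin L) ℝ) - F * Aᵀ * (A * Fᵀ * F * Aᵀ)⁻¹ * A * Fᵀ
    let copt : Fin m → ℝ := vecMul a (Fᵀ * F * Aᵀ * (A * Fᵀ * F * Aᵀ)⁻¹)
    let bopt : Fin N → ℝ :=
      vecMul (a - vecMul copt A) (P * Hᵀ * ((1 : Matrix (Fin N) (Fin N) ℝ) + H * P * Hᵀ)⁻¹)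
    (∀ b c, (Nm.mulVec (F.mulVec a)) ⬝ᵥ (Nm.mulVec (F.mulVec a)) ≤ f b c)
      ∧ f bopt copt = (Nm.mulVec (F.mulVec a)) ⬝ᵥ (Nm.mulVec (F.mulVec a)) := by
  intro S f Nm copt bopt
  set B := F * Aᵀ
  have hPt : P.IsSymm := hP.isHermitian.eq
  have hM : (1 + H * P * Hᵀ).PosDef := by
    simpa using PosDef.one.add_posSemidef (hP.posSemidef.mul_mul_conjTranspose_same H)
  have hQ : (Fᵀ * F).PosDef :=
    hF ▸ (hP.inv.add_posSemidef (by simpa using posSemidef_conjTranspose_mul_self H)).inv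
  have hG : (Bᵀ * B).PosDef := by
    simpa [B, Matrix.mul_assoc] using hQ.mul_mul_transpose_of_rank_eq_card (by simpa using hA)
  have hcopt : copt = (Bᵀ * B)⁻¹ *ᵥ Bᵀ *ᵥ F *ᵥ a := by
    rw [mulVec_mulVec, mulVec_mulVec, ← vecMul_transpose]
    simp [B, copt, transpose_nonsing_inv, Matrix.mul_assoc]
  have hnormal : Bᵀ *ᵥ (F *ᵥ a - B *ᵥ copt) = 0 :=
    hcopt ▸ transpose_mulVec_sub_mulVec_gram_inv hG.det_pos.ne'.isUnit (F *ᵥ a)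
  have hNm : Nm *ᵥ F *ᵥ a = F *ᵥ a - B *ᵥ copt := by
    simp only [hcopt, Nm, B, sub_mul, Matrix.one_mul, sub_mulVec, mulVec_mulVec, transpose_mul,
      transpose_transpose, Matrix.mul_assoc]
  have hbopt : bopt + (1 + H * P * Hᵀ)⁻¹ *ᵥ (H * P) *ᵥ (Aᵀ *ᵥ copt - a) = 0 := by
    rw [← neg_sub a, mulVec_neg, mulVec_neg, add_neg_eq_zero, mulVec_mulVec, ← vecMul_transpose]
    simp [bopt, transpose_nonsing_inv, hPt.eq, Matrix.mul_assoc, mulVec_transpose]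
  have hf : ∀ b c, f b c =
      b ⬝ᵥ b + (Hᵀ *ᵥ b + Aᵀ *ᵥ c - a) ⬝ᵥ P *ᵥ (Hᵀ *ᵥ b + Aᵀ *ᵥ c - a) := fun b c => by
    simp only [f, S, PosSemidef.vecMul_sqrt_dotProduct_self, mulVec_transpose]
  simp only [hf, mmse_cost_eq hPt hP.det_pos.ne'.isUnit H hM.det_pos.ne'.isUnit hF A hnormal, hNm]
  refine ⟨fun b c => ?_, ?_⟩
  · have hb := hM.posSemidef.dotProduct_mulVec_nonneg
      (b + (1 + H * P * Hᵀ)⁻¹ *ᵥ (H * P) *ᵥ (Aᵀ *ᵥ c - a))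
    have hc := dotProduct_self_star_nonneg (B *ᵥ (c - copt))
    rw [star_trivial] at hb hc
    linarith
  · rw [hbopt, sub_self, mulVec_zero, mulVec_zero, zero_dotProduct, zero_dotProduct, zero_add,
      zero_add]
end

section
/- Let P be diagonal positive definite with entries P₁,…,P_L, H ∈ ℝ^{N×L}, and let F ∈ ℝ^{L×L} satisfy FᵀF = (P⁻¹+HᵀH)⁻¹. Let A ∈ ℤ^{L×L} be unimodular with rows a₁ᵀ,…,a_Lᵀ, let A_{m−1} denote the submatrix of the first m−1 rows, and define σ²_m = ‖N_{m−1} F a_m‖² where N_{m−1} is the projection onto the nullspace of A_{m−1}Fᵀ (with N₀ = I). Then Σ_{m=1}^L (1/2) log(P_{π(m)} / σ²_m) = (1/2) log det(I + H P Hᵀ) for any permutation π of {1,…,L}; equivalently, ∏_{m=1}^L σ²_m = det((P⁻¹+HᵀH)⁻¹) = ∏_ℓ P_ℓ / det(I + H P Hᵀ). -/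
/-!
With `W = F Aᵀ`, whose columns are the vectors `F aₘ`, `σ²ₘ` is the squared distance from the
`m`-th column of `W` to the span of the previous ones. Bordering the Gram matrix `WᵀW` one column at
a time, the Schur complement of each step is exactly that squared distance, so
`∏ σ²ₘ = det (WᵀW) = det (FᵀF)` because `det A = ±1`. Finally
`det (P⁻¹ + HᵀH) · det P = det (I + H P Hᵀ)` by the Weinstein–Aronszajn identity.
-/

open Matrix

theorem det_succ_eq_det_castSucc_mul_schur {K : Type*} [Field K] {k : ℕ}
    (M : Matrix (Fin (k + 1)) (Fin (k + 1)) K)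
    (hM : IsUnit (M.submatrix Fin.castSucc Fin.castSucc).det) :
    M.det = (M.submatrix Fin.castSucc Fin.castSucc).det *
      (M (Fin.last k) (Fin.last k) - (fun j => M (Fin.last k) (Fin.castSucc j)) ⬝ᵥ
        ((M.submatrix Fin.castSucc Fin.castSucc)⁻¹ *ᵥ fun i => M (Fin.castSucc i) (Fin.last k))) := by
  set M₀ := M.submatrix Fin.castSucc Fin.castSucc
  have : Invertible M₀ := M₀.invertibleOfIsUnitDet hM
  have hblocks : M.submatrix finSumFinEquiv finSumFinEquiv = fromBlocks M₀
      (of fun i _ => M (Fin.castSucc i) (Fin.last k))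
      (of fun _ j => M (Fin.last k) (Fin.castSucc j))
      (of fun _ _ => M (Fin.last k) (Fin.last k)) := by
    ext (i | i) (j | j) <;> (try fin_cases i) <;> (try fin_cases j) <;> rfl
  rw [← det_submatrix_equiv_self finSumFinEquiv, hblocks, det_fromBlocks₁₁, det_fin_one,
    invOf_eq_nonsing_inv, dotProduct_mulVec]
  rfl

section Residual

variable {ι κ : Type*} [Fintype ι] [DecidableEq ι] [Fintype κ] [DecidableEq κ]

/-- The squared distance from `v` to the column space of `B`, onto which
`B (BᵀB)⁻¹ Bᵀ` is the orthogonal projection. -/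
noncomputable def residualSq (B : Matrix ι κ ℝ) (v : ι → ℝ) : ℝ :=
  let r := (1 - B * (Bᵀ * B)⁻¹ * Bᵀ) *ᵥ v
  r ⬝ᵥ r

theorem residualSq_eq (B : Matrix ι κ ℝ) (v : ι → ℝ) (hB : IsUnit (Bᵀ * B).det) :
    residualSq B v = v ⬝ᵥ v - (Bᵀ *ᵥ v) ⬝ᵥ ((Bᵀ * B)⁻¹ *ᵥ (Bᵀ *ᵥ v)) := by
  set w := (Bᵀ * B)⁻¹ *ᵥ (Bᵀ *ᵥ v)
  have hr : (1 - B * (Bᵀ * B)⁻¹ * Bᵀ) *ᵥ v = v - B *ᵥ w := by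
    simp only [w, sub_mulVec, one_mulVec, mulVec_mulVec, Matrix.mul_assoc]
  have horth : Bᵀ *ᵥ (v - B *ᵥ w) = 0 := by
    rw [mulVec_sub, mulVec_mulVec, mulVec_mulVec, mul_nonsing_inv _ hB, one_mulVec, sub_self]
  have hadj : ∀ u, (B *ᵥ w) ⬝ᵥ u = w ⬝ᵥ (Bᵀ *ᵥ u) := fun u => by
    rw [dotProduct_comm, dotProduct_mulVec, mulVec_transpose, dotProduct_comm]
  calc residualSq B v = (v - B *ᵥ w) ⬝ᵥ (v - B *ᵥ w) := by rw [residualSq, hr]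
    _ = v ⬝ᵥ (v - B *ᵥ w) := by rw [sub_dotProduct, hadj, horth, dotProduct_zero, sub_zero]
    _ = v ⬝ᵥ v - (Bᵀ *ᵥ v) ⬝ᵥ w := by
      rw [dotProduct_sub, dotProduct_comm v (B *ᵥ w), hadj, dotProduct_comm w]

theorem det_transpose_mul_self_eq_prod_residualSq :
    ∀ {L : ℕ} (W : Matrix ι (Fin L) ℝ), (Wᵀ * W).PosDef →
      (Wᵀ * W).det = ∏ m : Fin L, residualSq (W.submatrix id (Fin.castLE m.isLt.le)) (Wᵀ m)
  | 0, W, _ => by simp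
  | L + 1, W, hW => by
    set W₀ := W.submatrix id Fin.castSucc
    have hgram : (Wᵀ * W).submatrix Fin.castSucc Fin.castSucc = W₀ᵀ * W₀ := rfl
    have hW₀ : (W₀ᵀ * W₀).PosDef := hgram ▸ hW.submatrix (Fin.castSucc_injective L)
    have hunit : IsUnit (W₀ᵀ * W₀).det := hW₀.det_pos.ne'.isUnit
    have hprefix : ∏ m : Fin L, residualSq (W.submatrix id (Fin.castLE m.castSucc.isLt.le))
        (Wᵀ m.castSucc) = (W₀ᵀ * W₀).det :=
      (det_transpose_mul_self_eq_prod_residualSq W₀ hW₀).symm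
    have hlast : residualSq (W.submatrix id (Fin.castLE (Fin.last L).isLt.le)) (Wᵀ (Fin.last L))
        = residualSq W₀ (Wᵀ (Fin.last L)) := rfl
    have hrow : (fun j => (Wᵀ * W) (Fin.last L) j.castSucc) = W₀ᵀ *ᵥ Wᵀ (Fin.last L) :=
      funext fun _ => dotProduct_comm _ _
    have hcol : (fun i => (Wᵀ * W) i.castSucc (Fin.last L)) = W₀ᵀ *ᵥ Wᵀ (Fin.last L) := rfl
    rw [Fin.prod_univ_castSucc, hprefix, hlast, residualSq_eq _ _ hunit,
      det_succ_eq_det_castSucc_mul_schur _ (hgram ▸ hunit), hgram, hrow, hcol]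
    rfl

theorem prod_residualSq_mul_transpose {L : ℕ} (F : Matrix ι (Fin L) ℝ)
    (C : Matrix (Fin L) (Fin L) ℝ) (hF : (Fᵀ * F).det ≠ 0) (hC : C.det ^ 2 = 1) :
    ∏ m : Fin L, residualSq ((F * Cᵀ).submatrix id (Fin.castLE m.isLt.le)) ((F * Cᵀ)ᵀ m)
      = (Fᵀ * F).det := by
  set W := F * Cᵀ
  have hgram : (Wᵀ * W).det = (Fᵀ * F).det := by
    rw [show Wᵀ * W = C * (Fᵀ * F) * Cᵀ by
        simp only [W, transpose_mul, transpose_transpose, Matrix.mul_assoc],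
      det_mul, det_mul, det_transpose]
    linear_combination (Fᵀ * F).det * hC
  have hW : (Wᵀ * W).PosDef :=
    (by simpa using posSemidef_conjTranspose_mul_self W : (Wᵀ * W).PosSemidef)
      |>.posDef_iff_det_ne_zero.mpr (hgram ▸ hF)
  rw [← det_transpose_mul_self_eq_prod_residualSq W hW, hgram]

end Residual

theorem det_inv_add_transpose_mul_self_mul_det {R : Type*} [CommRing R] {n p : Type*}
    [Fintype n] [DecidableEq n] [Fintype p] [DecidableEq p]
    (D : Matrix n n R) (H : Matrix p n R) (hD : IsUnit D.det) :
    (D⁻¹ + Hᵀ * H).det * D.det = (1 + H * D * Hᵀ).det := by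
  rw [← det_mul, Matrix.add_mul, nonsing_inv_mul _ hD, Matrix.mul_assoc, det_one_add_mul_comm]

section PosDef

variable {n p : Type*} [Fintype n] [DecidableEq n] [Fintype p]

theorem posDef_inv_add_transpose_mul_self {D : Matrix n n ℝ} (hD : D.PosDef)
    (H : Matrix p n ℝ) : (D⁻¹ + Hᵀ * H).PosDef :=
  hD.inv.add_posSemidef (by simpa using posSemidef_conjTranspose_mul_self H)

theorem det_inv_add_transpose_mul_self_inv [DecidableEq p] {D : Matrix n n ℝ} (hD : D.PosDef)
    (H : Matrix p n ℝ) : (D⁻¹ + Hᵀ * H)⁻¹.det = D.det / (1 + H * D * Hᵀ).det := by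
  rw [det_nonsing_inv, Ring.inverse_eq_inv',
    ← det_inv_add_transpose_mul_self_mul_det D H hD.det_pos.ne'.isUnit]
  field_simp [(posDef_inv_add_transpose_mul_self hD H).det_pos.ne', hD.det_pos.ne']

end PosDef

theorem stmt_8 {L N : ℕ} (d : Fin L → ℝ) (hd : ∀ i, 0 < d i)
    (H : Matrix (Fin N) (Fin L) ℝ) (F : Matrix (Fin L) (Fin L) ℝ)
    (hF : Fᵀ * F = ((Matrix.diagonal d)⁻¹ + Hᵀ * H)⁻¹)
    (A : Matrix (Fin L) (Fin L) ℤ) (hA : A.det = 1 ∨ A.det = -1)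
    (π : Equiv.Perm (Fin L)) :
    let AR : Matrix (Fin L) (Fin L) ℝ := A.map (fun z => (z : ℝ))
    let Asub : (m : Fin L) → Matrix (Fin m.val) (Fin L) ℝ := fun m =>
      Matrix.of fun i j => AR ⟨i.val, i.isLt.trans m.isLt⟩ j
    let Nm : (m : Fin L) → Matrix (Fin L) (Fin L) ℝ := fun m =>
      1 - F * (Asub m)ᵀ * (Asub m * Fᵀ * F * (Asub m)ᵀ)⁻¹ * Asub m * Fᵀ
    let σ2 : Fin L → ℝ := fun m =>
      ((Nm m).mulVec (F.mulVec (fun j => AR m j))) ⬝ᵥ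
        ((Nm m).mulVec (F.mulVec (fun j => AR m j)))
    ∑ m, (1 / 2 : ℝ) * Real.log (d (π m) / σ2 m)
      = (1 / 2 : ℝ) * Real.log ((1 + H * Matrix.diagonal d * Hᵀ).det) := by
  intro AR Asub Nm σ2
  have hD : (diagonal d).PosDef := PosDef.diagonal hd
  have hd_prod : ∏ i, d i ≠ 0 := Finset.prod_ne_zero_iff.mpr fun i _ => (hd i).ne'
  have hFF_ne : (Fᵀ * F).det ≠ 0 := hF ▸ (posDef_inv_add_transpose_mul_self hD H).inv.det_pos.ne'
  have hAR : AR.det ^ 2 = 1 := by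
    rcases hA with h | h <;> simp [AR, ← Int.cast_det, h]
  have hσ : ∀ m, σ2 m = residualSq ((F * ARᵀ).submatrix id (Fin.castLE m.isLt.le))
      ((F * ARᵀ)ᵀ m) := by
    intro m
    have hB : (F * ARᵀ).submatrix id (Fin.castLE m.isLt.le) = F * (Asub m)ᵀ := by ext; rfl
    have hv : (F * ARᵀ)ᵀ m = F *ᵥ AR m := rfl
    rw [residualSq, hB, hv]
    simp only [σ2, Nm, transpose_mul, transpose_transpose, Matrix.mul_assoc]
  have hσ_prod : ∏ m, σ2 m = (Fᵀ * F).det := by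
    rw [Finset.prod_congr rfl fun m _ => hσ m, prod_residualSq_mul_transpose F AR hFF_ne hAR]
  have hσ_ne : ∀ m, σ2 m ≠ 0 := fun m =>
    Finset.prod_ne_zero_iff.mp (hσ_prod ▸ hFF_ne) m (Finset.mem_univ m)
  rw [← Finset.mul_sum, ← Real.log_prod fun m _ => div_ne_zero (hd _).ne' (hσ_ne m),
    Finset.prod_div_distrib, Equiv.prod_comp π d, hσ_prod, hF,
    det_inv_add_transpose_mul_self_inv hD H, det_diagonal, div_div_cancel₀ hd_prod]
end

section
/- Let P = diag(P₁,…,P_L) be positive definite, H ∈ ℝ^{N×L}, F with FᵀF = (P⁻¹+HᵀH)⁻¹, and let a₁*,…,a_L* ∈ ℤ^L be linearly independent integer vectors achieving the successive minima of the lattice Fℤ^L, i.e. ‖Fa_m*‖ = λ_m. Then for any permutation π, Σ_{ℓ=1}^L (1/2) log(P_ℓ / ‖F a*_{π(ℓ)}‖²) ≥ (1/2) log det(I + H P Hᵀ) − (L/2) log L. -/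
/-!
Write `b m = F a*_m` and `λ_m = ‖b m‖`. Gram–Schmidt applied to `b` gives an orthogonal `U` for
which `U b` is upper triangular. Let `v ≠ 0` be a lattice vector and `k` the last index with
`(U v)_k ≠ 0`. Then `v` is not in the span of `b 0, …, b (k-1)`, so `λ_k ≤ ‖v‖ = ‖U v‖`. Since the
minima increase, this rules out `n (U v)_i² < λ_i²` for every `i`. Hence the box
`|(U v)_i| < λ_i / √n` contains no nonzero lattice point, and Minkowski's convex body theorem gives
`∏ λ_i ≤ n^{n/2} |det F|`, which is a weak form of Minkowski's second theorem. Finally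
`det (FᵀF) = det (P⁻¹ + HᵀH)⁻¹` and `det (I + HPHᵀ) = det P · det (P⁻¹ + HᵀH)` (Sylvester),
and taking logarithms gives the bound.
-/

open Matrix Set Submodule

theorem dotProduct_self_nonneg {ι R : Type*} [Fintype ι] [Ring R] [LinearOrder R]
    [IsStrictOrderedRing R] (v : ι → R) : 0 ≤ v ⬝ᵥ v :=
  Fintype.sum_nonneg fun i => mul_self_nonneg (v i)

theorem Real.sum_log_div_perm {ι : Type*} [Fintype ι] {p q : ι → ℝ} (hp : ∀ i, p i ≠ 0)
    (hq : ∀ i, q i ≠ 0) (π : Equiv.Perm ι) :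
    ∑ i, Real.log (p i / q (π i)) = Real.log (∏ i, p i) - Real.log (∏ i, q i) := by
  rw [Real.log_prod fun i _ => hp i, Real.log_prod fun i _ => hq i,
    ← Equiv.sum_comp π fun i => Real.log (q i), ← Finset.sum_sub_distrib]
  exact Finset.sum_congr rfl fun i _ => Real.log_div (hp i) (hq _)

theorem Matrix.det_one_add_mul_mul {m n R : Type*} [Fintype m] [DecidableEq m] [Fintype n]
    [DecidableEq n] [CommRing R] (A : Matrix m n R) (P : Matrix n n R) (B : Matrix n m R)
    (hP : IsUnit P.det) : (1 + A * P * B).det = P.det * (P⁻¹ + B * A).det := by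
  rw [Matrix.mul_assoc, det_one_add_mul_comm, ← det_mul, Matrix.mul_add, mul_nonsing_inv _ hP,
    Matrix.mul_assoc]

open MeasureTheory Module in
theorem Matrix.prod_le_abs_det_of_forall_exists_le_abs_mulVec {ι : Type*} [Fintype ι]
    [DecidableEq ι] {M : Matrix ι ι ℝ} (hM : M.det ≠ 0) {c : ι → ℝ} (hc : ∀ i, 0 ≤ c i)
    (h : ∀ z : ι → ℤ, z ≠ 0 → ∃ i, c i ≤ |(M *ᵥ (Int.cast ∘ z)) i|) :
    ∏ i, c i ≤ |M.det| := by
  by_contra! hlt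
  let b : Basis ι ℝ (ι → ℝ) :=
    (Pi.basisFun ℝ ι).map (M.toLinearEquiv' (M.invertibleOfIsUnitDet hM.isUnit))
  have hb : ∀ i, b i = M *ᵥ Pi.single i 1 := fun i => by
    simp only [b, Basis.map_apply, Pi.basisFun_apply]
    rfl
  have hmem : ∀ x ∈ span ℤ (range b), ∃ z : ι → ℤ, x = M *ᵥ (Int.cast ∘ z) := by
    intro x hx
    obtain ⟨z, rfl⟩ := (mem_span_range_iff_exists_fun ℤ).1 hx
    refine ⟨z, ?_⟩
    simp only [hb, ← Int.cast_smul_eq_zsmul ℝ, ← mulVec_smul, ← mulVec_sum]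
    congr 1
    ext j
    simp [Pi.single_apply]
  let box : Set (ι → ℝ) := univ.pi fun i => Ioo (-c i) (c i)
  have hvol : volume (ZSpan.fundamentalDomain b) * 2 ^ finrank ℝ (ι → ℝ) < volume box := by
    have hMt : of b = Mᵀ := by ext i j; simp [hb]
    have hprod : 0 < 2 ^ Fintype.card ι * ∏ i, c i := by
      have := (abs_nonneg M.det).trans_lt hlt
      positivity
    rw [ZSpan.volume_fundamentalDomain, hMt, det_transpose, volume_pi_pi]
    simp only [Real.volume_Ioo, sub_neg_eq_add, ← two_mul, finrank_fintype_fun_eq_card]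
    rw [← ENNReal.ofReal_prod_of_nonneg fun i _ => by linarith [hc i], Finset.prod_mul_distrib,
      Finset.prod_const, Finset.card_univ, ← ENNReal.ofReal_ofNat 2,
      ← ENNReal.ofReal_pow zero_le_two, ← ENNReal.ofReal_mul (abs_nonneg _),
      ENNReal.ofReal_lt_ofReal_iff hprod, mul_comm]
    exact mul_lt_mul_of_pos_left hlt (by positivity)
  have : Countable (span ℤ (range b)).toAddSubgroup :=
    inferInstanceAs (Countable (span ℤ (range b)))
  obtain ⟨x, hx0, hx⟩ := exists_ne_zero_mem_lattice_of_measure_mul_two_pow_lt_measure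
    (ZSpan.isAddFundamentalDomain' b volume) (s := box)
    (fun x hx i _ => by simpa [and_comm, neg_lt] using hx i trivial)
    (convex_pi fun i _ => convex_Ioo _ _) hvol
  obtain ⟨z, hz⟩ := hmem x x.2
  obtain ⟨i, hi⟩ := h z fun hz0 => hx0 (Subtype.ext (by simp [hz, hz0]))
  exact hi.not_gt (abs_lt.2 (hz ▸ hx i trivial))

theorem Matrix.exists_transpose_mul_self_eq_one_and_blockTriangular_mul {n : ℕ}
    (B : Matrix (Fin n) (Fin n) ℝ) :
    ∃ U : Matrix (Fin n) (Fin n) ℝ, Uᵀ * U = 1 ∧ (U * B).BlockTriangular id := by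
  let f : Fin n → EuclideanSpace ℝ (Fin n) := fun i => WithLp.toLp 2 (Bᵀ i)
  let u := InnerProductSpace.gramSchmidtOrthonormalBasis finrank_euclideanSpace f
  let C := (EuclideanSpace.basisFun (Fin n) ℝ).toBasis.toMatrix u
  refine ⟨Cᵀ, ?_, fun k i (hik : i < k) => ?_⟩
  · simpa using
      (EuclideanSpace.basisFun (Fin n) ℝ).toMatrix_orthonormalBasis_self_mul_conjTranspose u
  · have : inner ℝ (u k) (f i) = 0 :=
      InnerProductSpace.gramSchmidtOrthonormalBasis_inv_triangular _ f hik
    rw [PiLp.inner_apply] at this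
    rw [mul_apply, ← this]
    refine Finset.sum_congr rfl fun j _ => ?_
    simp [C, f, u, Module.Basis.toMatrix_apply, mul_comm]

section SuccessiveMinima

variable {V : Type*} [AddCommGroup V] [Module ℝ V]

/-- Counted from `0`: `successiveMinimum N Λ m` is the paper's `λ_{m+1}`. -/
noncomputable def successiveMinimum (N : V → ℝ) (Λ : Set V) (m : ℕ) : ℝ :=
  sInf {r | ∃ w : Fin (m + 1) → V, (∀ i, w i ∈ Λ) ∧ LinearIndependent ℝ w ∧ ∀ i, N (w i) ≤ r}

structure AttainsSuccessiveMinima (N : V → ℝ) (Λ : Set V) {n : ℕ} (b : Fin n → V) : Prop where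
  mem : ∀ i, b i ∈ Λ
  linearIndependent : LinearIndependent ℝ b
  eq_successiveMinimum : ∀ k, N (b k) = successiveMinimum N Λ k

variable {N : V → ℝ} {Λ : Set V}

theorem exists_successiveMinimum_le (hN : ∀ v, 0 ≤ N v) {m : ℕ} {w : Fin (m + 1) → V}
    (hwΛ : ∀ i, w i ∈ Λ) (hw : LinearIndependent ℝ w) :
    ∃ i, successiveMinimum N Λ m ≤ N (w i) := by
  obtain ⟨i, -, hi⟩ := Finset.exists_max_image Finset.univ (N ∘ w) Finset.univ_nonempty
  refine ⟨i, csInf_le ⟨0, ?_⟩ ⟨w, hwΛ, hw, fun j => hi j (Finset.mem_univ j)⟩⟩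
  rintro r ⟨w', -, -, hr⟩
  exact (hN _).trans (hr 0)

namespace AttainsSuccessiveMinima

variable {n : ℕ} {b : Fin n → V}

theorem le_of_notMem_span (h : AttainsSuccessiveMinima N Λ b) (hN : ∀ v, 0 ≤ N v) (k : Fin n)
    {v : V} (hv : v ∈ Λ) (hvk : v ∉ span ℝ (b '' Iio k)) : N (b k) ≤ N v := by
  induction k using WellFoundedLT.induction with
  | _ k ih =>
  let e : Fin k → Fin n := Fin.castLE k.is_le'
  have he : range (b ∘ e) ⊆ b '' Iio k := by
    rintro _ ⟨i, rfl⟩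
    exact ⟨e i, i.isLt, rfl⟩
  have hw : LinearIndependent ℝ (Fin.snoc (b ∘ e) v : Fin (k + 1) → V) :=
    linearIndependent_finSnoc.2
      ⟨h.linearIndependent.comp e (Fin.castLE_injective _), fun hmem => hvk (span_mono he hmem)⟩
  obtain ⟨i, hi⟩ := exists_successiveMinimum_le hN
    (fun i => Fin.lastCases (by simpa using hv) (fun i => by simpa using h.mem (e i)) i) hw
  rw [← h.eq_successiveMinimum k] at hi
  induction i using Fin.lastCases with
  | last => simpa using hi
  | cast i =>
    have hik : e i < k := i.isLt
    simp only [Fin.snoc_castSucc, Function.comp_apply] at hi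
    exact hi.trans <| ih _ hik fun hmem => hvk (span_mono (image_mono (Iio_subset_Iio hik.le)) hmem)

theorem monotone (h : AttainsSuccessiveMinima N Λ b) (hN : ∀ v, 0 ≤ N v) : Monotone (N ∘ b) :=
  fun i j hij => h.le_of_notMem_span hN i (h.mem j)
    (h.linearIndependent.notMem_span_image (not_lt.2 hij))

end AttainsSuccessiveMinima

end SuccessiveMinima

def Matrix.intLattice {ι : Type*} [Fintype ι] (F : Matrix ι ι ℝ) : Set (ι → ℝ) :=
  {v | ∃ z : ι → ℤ, v = F *ᵥ fun j => (z j : ℝ)}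
theorem AttainsSuccessiveMinima.exists_le_mul_sq_mulVec {n : ℕ} {Λ : Set (Fin n → ℝ)}
    {b : Fin n → Fin n → ℝ} (h : AttainsSuccessiveMinima (fun v => √(v ⬝ᵥ v)) Λ b)
    {U : Matrix (Fin n) (Fin n) ℝ} (hU : Uᵀ * U = 1) (hUb : (U * (of b)ᵀ).BlockTriangular id)
    {v : Fin n → ℝ} (hv : v ∈ Λ) (hv0 : v ≠ 0) :
    ∃ i, b i ⬝ᵥ b i ≤ n * (U *ᵥ v) i ^ 2 := by
  have hN : ∀ v : Fin n → ℝ, 0 ≤ √(v ⬝ᵥ v) := fun _ => Real.sqrt_nonneg _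
  set w := U *ᵥ v
  have hww : w ⬝ᵥ w = v ⬝ᵥ v := by
    rw [dotProduct_mulVec, ← mulVec_transpose, mulVec_mulVec, hU, one_mulVec]
  obtain ⟨k, hk, hk_max⟩ : ∃ k, w k ≠ 0 ∧ ∀ i, k < i → w i = 0 := by
    have hsupp : (Finset.univ.filter (w · ≠ 0)).Nonempty := by
      obtain ⟨i, hi⟩ := Function.ne_iff.1 fun hw0 : w = 0 => hv0 <| by
        rw [← dotProduct_self_eq_zero, ← hww, hw0, zero_dotProduct]
      exact ⟨i, by simpa using hi⟩
    refine ⟨_, by simpa using Finset.max'_mem _ hsupp, fun i hki => ?_⟩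
    by_contra hi
    exact hki.not_ge (Finset.le_max' _ i (by simpa using hi))
  have hvk : v ∉ span ℝ (b '' Iio k) := fun hmem => hk <| by
    have : span ℝ (b '' Iio k) ≤ LinearMap.ker ((LinearMap.proj k).comp U.mulVecLin) := by
      refine span_le.2 ?_
      rintro _ ⟨i, hi, rfl⟩
      simpa [mulVec, dotProduct, mul_apply] using hUb hi
    simpa using this hmem
  have hqk : b k ⬝ᵥ b k ≤ w ⬝ᵥ w :=
    hww ▸ (Real.sqrt_le_sqrt_iff (dotProduct_self_nonneg v)).1 (h.le_of_notMem_span hN k hv hvk)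
  by_contra! hlt
  have hlt_k : ∀ i, n * w i ^ 2 < b k ⬝ᵥ b k := fun i => by
    rcases le_or_gt i k with hik | hki
    · exact (hlt i).trans_le
        ((Real.sqrt_le_sqrt_iff (dotProduct_self_nonneg _)).1 (h.monotone hN hik))
    · rw [hk_max i hki]
      simpa using (by positivity : 0 ≤ (n : ℝ) * w k ^ 2).trans_lt (hlt k)
  have : n * (w ⬝ᵥ w) < n * (b k ⬝ᵥ b k) := by
    simpa [dotProduct, Finset.mul_sum, sq] using
      Finset.sum_lt_sum_of_nonempty ⟨k, Finset.mem_univ k⟩ fun i _ => hlt_k i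
  exact this.not_ge (by gcongr)

theorem AttainsSuccessiveMinima.prod_dotProduct_self_le {n : ℕ} {F : Matrix (Fin n) (Fin n) ℝ}
    (hF : F.det ≠ 0) {b : Fin n → Fin n → ℝ}
    (h : AttainsSuccessiveMinima (fun v => √(v ⬝ᵥ v)) F.intLattice b) :
    ∏ i, b i ⬝ᵥ b i ≤ n ^ n * F.det ^ 2 := by
  obtain ⟨U, hU, hUb⟩ := exists_transpose_mul_self_eq_one_and_blockTriangular_mul (of b)ᵀ
  have hUdet : |U.det| = 1 := by
    refine (pow_eq_one_iff_of_nonneg (abs_nonneg _) two_ne_zero).1 ?_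
    simpa [sq_abs, sq] using congrArg det hU
  have hbox : ∏ i, √(b i ⬝ᵥ b i) ≤ |(√n • (U * F)).det| := by
    refine prod_le_abs_det_of_forall_exists_le_abs_mulVec ?_ (fun i => Real.sqrt_nonneg _)
      fun z hz => ?_
    · have : U.det ≠ 0 := fun h0 => by simp [h0] at hUdet
      simp [hF, this]
    · have hv0 : F *ᵥ (Int.cast ∘ z) ≠ 0 := fun h0 => hF <| exists_mulVec_eq_zero_iff.1
        ⟨Int.cast ∘ z, fun hz0 => hz (funext fun j => by simpa using congrFun hz0 j), h0⟩
      obtain ⟨i, hi⟩ := h.exists_le_mul_sq_mulVec hU hUb ⟨z, rfl⟩ hv0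
      refine ⟨i, ?_⟩
      rw [smul_mulVec, ← mulVec_mulVec, Pi.smul_apply, smul_eq_mul, ← Real.sqrt_sq_eq_abs]
      exact Real.sqrt_le_sqrt (by rwa [mul_pow, Real.sq_sqrt n.cast_nonneg])
  rw [det_smul, det_mul, abs_mul, abs_mul, hUdet, one_mul, Fintype.card_fin, abs_pow,
    abs_of_nonneg (Real.sqrt_nonneg _)] at hbox
  calc ∏ i, b i ⬝ᵥ b i = (∏ i, √(b i ⬝ᵥ b i)) ^ 2 := by
        rw [← Finset.prod_pow]
        exact Finset.prod_congr rfl fun i _ => (Real.sq_sqrt (dotProduct_self_nonneg _)).symm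
    _ ≤ (√n ^ n * |F.det|) ^ 2 := by gcongr
    _ = n ^ n * F.det ^ 2 := by
        rw [mul_pow, ← pow_mul, mul_comm n 2, pow_mul, Real.sq_sqrt n.cast_nonneg, sq_abs]

theorem stmt_11 {L N : ℕ} (d : Fin L → ℝ) (hd : ∀ i, 0 < d i)
    (H : Matrix (Fin N) (Fin L) ℝ) (F : Matrix (Fin L) (Fin L) ℝ)
    (hF : Fᵀ * F = ((Matrix.diagonal d)⁻¹ + Hᵀ * H)⁻¹)
    (astar : Fin L → (Fin L → ℤ))
    (hind : LinearIndependent ℝ (fun m => fun j => ((astar m j : ℝ))))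
    (hmin : ∀ m : Fin L,
      Real.sqrt ((F.mulVec fun j => ((astar m j : ℝ))) ⬝ᵥ
          (F.mulVec fun j => ((astar m j : ℝ))))
        = sInf {r : ℝ | ∃ w : Fin (m.val + 1) → (Fin L → ℝ),
            (∀ i, ∃ z : Fin L → ℤ, w i = F.mulVec (fun j => (z j : ℝ))) ∧
            LinearIndependent ℝ w ∧ ∀ i, Real.sqrt (w i ⬝ᵥ w i) ≤ r})
    (π : Equiv.Perm (Fin L)) :
    ∑ ℓ, (1 / 2 : ℝ) * Real.log (d ℓ /
        ((F.mulVec fun j => ((astar (π ℓ) j : ℝ))) ⬝ᵥ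
          (F.mulVec fun j => ((astar (π ℓ) j : ℝ)))))
      ≥ (1 / 2 : ℝ) * Real.log ((1 + H * Matrix.diagonal d * Hᵀ).det)
        - (L : ℝ) / 2 * Real.log L := by
  set G := (diagonal d)⁻¹ + Hᵀ * H
  have hG : 0 < G.det := (((posDef_diagonal_iff.2 hd).inv).add_posSemidef
    (by simpa using posSemidef_conjTranspose_mul_self H)).det_pos
  have hFG : F.det ^ 2 * G.det = 1 := by
    have := congrArg det hF
    rw [det_mul, det_transpose, det_nonsing_inv, Ring.inverse_eq_inv'] at this
    rw [sq, this, inv_mul_cancel₀ hG.ne']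
  have hFdet : F.det ≠ 0 := fun h0 => by simp [h0] at hFG
  set b : Fin L → Fin L → ℝ := fun m => F *ᵥ fun j => (astar m j : ℝ)
  have hb : AttainsSuccessiveMinima (fun v => √(v ⬝ᵥ v)) F.intLattice b :=
    ⟨fun m => ⟨astar m, rfl⟩, hind.map' F.mulVecLin <| LinearMap.ker_eq_bot.2 <|
      mulVec_injective_iff_isUnit.2 ((isUnit_iff_isUnit_det F).2 hFdet.isUnit), hmin⟩
  have hq : ∀ m, 0 < b m ⬝ᵥ b m := fun m => (dotProduct_self_nonneg _).lt_of_ne'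
    (dotProduct_self_eq_zero.not.2 (hb.linearIndependent.ne_zero m))
  have hd_prod : 0 < ∏ ℓ, d ℓ := Finset.prod_pos fun ℓ _ => hd ℓ
  have hprod : Real.log (∏ m, b m ⬝ᵥ b m) + Real.log G.det ≤ L * Real.log L := by
    rw [← Real.log_mul (Finset.prod_pos fun m _ => hq m).ne' hG.ne', ← Real.log_pow]
    refine Real.log_le_log (mul_pos (Finset.prod_pos fun m _ => hq m) hG) ?_
    calc (∏ m, b m ⬝ᵥ b m) * G.det ≤ L ^ L * F.det ^ 2 * G.det :=
          mul_le_mul_of_nonneg_right (hb.prod_dotProduct_self_le hFdet) hG.le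
      _ = L ^ L := by rw [mul_assoc, hFG, mul_one]
  have hdet : (1 + H * diagonal d * Hᵀ).det = (∏ ℓ, d ℓ) * G.det := by
    rw [det_one_add_mul_mul _ _ _ (by simpa [det_diagonal] using hd_prod.ne'), det_diagonal]
  rw [← Finset.mul_sum, Real.sum_log_div_perm (fun ℓ => (hd ℓ).ne') (fun m => (hq m).ne') π,
    hdet, Real.log_mul hd_prod.ne' hG.ne']
  linarith
end
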